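/- Let p be a prime, q a power of p, h, k positive integers with p ≥ h, and let t₁, …, t_j ∈ F_q be pairwise distinct and α₁, …, α_{k−j} be elements of F_{q^h} generating F_{q^h} over F_q and lying in pairwise distinct q-Frobenius orbits. Then the hk × hk block matrix N, whose first j·h rows consist of the blocks A_{t_i} (the h rows of A_t being the vectors of coefficients (d^ℓ/dt^ℓ)(1, t, t², …, t^{hk−1}) for ℓ = 0,…,h−1) and whose remaining (k−j)·h rows are the vectors (1, α_r^{q^s}, …, α_r^{(hk−1)q^s}) for s = 0,…,h−1, is invertible. -/

import Mathlib

/-!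
A vector `v` in the kernel of the matrix is the coefficient vector of a polynomial `P` of degree
`< hk`. The osculating rows say that the first `h` derivatives of `P` vanish at each `tᵢ`, which
(as `h ≤ p`) means `tᵢ` is a root of multiplicity at least `h`; the conjugate rows say that every
`α_r ^ q ^ s` is a root. These `hk` roots are pairwise distinct: the Frobenius automorphism has
order `h`, an automorphism fixing a generator is trivial, so the `h` conjugates of `α_r` are
distinct and none of them lies in `F_q`, while conjugates of elements of different Frobenius orbits
never meet. Counting roots forces `P = 0`, hence `v = 0`.
-/

open Polynomial Module Function

namespace Polynomial

variable {K : Type*} [Field K]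

theorem sum_le_natDegree_of_le_rootMultiplicity {ι : Type*} [Fintype ι] {P : K[X]} (hP : P ≠ 0)
    {z : ι → K} (hz : Injective z) {m : ι → ℕ} (hm : ∀ i, m i ≤ P.rootMultiplicity (z i)) :
    ∑ i, m i ≤ P.natDegree := by
  have hdvd : ∏ i, (X - C (z i)) ^ m i ∣ P :=
    Fintype.prod_dvd_of_coprime ((pairwise_coprime_X_sub_C hz).mono fun _ _ h ↦ h.pow)
      fun i ↦ (le_rootMultiplicity_iff hP).mp (hm i)
  simpa [natDegree_prod_of_monic, (monic_X_sub_C _).pow] using natDegree_le_of_dvd hdvd hP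

theorem le_rootMultiplicity_of_isRoot_iterate_derivative (p : ℕ) [CharP K p] {P : K[X]}
    (hP : P ≠ 0) {a : K} {n : ℕ} (hnp : n ≤ p)
    (hroot : ∀ m < n, (derivative^[m] P).IsRoot a) : n ≤ P.rootMultiplicity a := by
  rcases n with _ | n
  · exact Nat.zero_le _
  refine lt_rootMultiplicity_of_isRoot_iterate_derivative_of_mem_nonZeroDivisors' hP
    (fun m hm ↦ hroot m (Nat.lt_succ_of_le hm)) fun m hm hm0 ↦ mem_nonZeroDivisors_of_ne_zero ?_
  rw [Ne, CharP.cast_eq_zero_iff K p]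
  exact fun hdvd ↦ by have := Nat.le_of_dvd (Nat.pos_of_ne_zero hm0) hdvd; omega

theorem eval_iterate_derivative_X_pow (i ℓ : ℕ) (z : K) :
    (derivative^[ℓ] (X ^ i : K[X])).eval z =
      if i < ℓ then 0 else (∏ s ∈ Finset.range ℓ, ((i - s : ℕ) : K)) * z ^ (i - ℓ) := by
  rw [iterate_derivative_X_pow_eq_C_mul, eval_mul, eval_C, eval_pow, eval_X]
  split_ifs with h
  · simp [Nat.descFactorial_eq_zero_iff_lt.mpr h]
  · rw [Nat.descFactorial_eq_prod_range, Nat.cast_prod]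

theorem eval_iterate_derivative_sum_C_mul_X_pow {n : ℕ} (v : Fin n → K) (ℓ : ℕ) (z : K) :
    (derivative^[ℓ] (∑ i : Fin n, C (v i) * X ^ (i : ℕ))).eval z =
      ∑ i : Fin n, (derivative^[ℓ] (X ^ (i : ℕ) : K[X])).eval z * v i := by
  rw [iterate_derivative_sum, eval_finsetSum]
  refine Finset.sum_congr rfl fun i _ ↦ ?_
  rw [iterate_derivative_C_mul, eval_mul, eval_C, mul_comm]

theorem sum_C_mul_X_pow_eq_zero_iff {n : ℕ} (v : Fin n → K) :
    ∑ i : Fin n, C (v i) * X ^ (i : ℕ) = 0 ↔ v = 0 := by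
  refine ⟨fun h ↦ ?_, fun h ↦ by simp [h]⟩
  ext i
  simpa [finsetSum_coeff, coeff_C_mul, coeff_X_pow, Fin.val_eq_val] using congrArg (coeff · i) h

end Polynomial

open IntermediateField in
theorem AlgEquiv.eq_of_apply_eq_of_adjoin_eq_top {F E : Type*} [Field F] [Field E] [Algebra F E]
    {α : E} (hα : adjoin F {α} = ⊤) {f g : E ≃ₐ[F] E} (h : f α = g α) : f = g := by
  have hcomp : (f : E →ₐ[F] E).comp (adjoin F {α}).val = (g : E →ₐ[F] E).comp (adjoin F {α}).val :=
    adjoin_algHom_ext F fun x hx ↦ by cases hx; exact h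
  ext x
  exact congr($hcomp ⟨x, hα ▸ mem_top⟩)

namespace FiniteField

open IntermediateField

variable (Fq : Type*) {K : Type*} [Field Fq] [Fintype Fq] [Field K] [Finite K] [Algebra Fq K]

theorem frobeniusAlgEquivOfAlgebraic_pow_apply (n : ℕ) (x : K) :
    (frobeniusAlgEquivOfAlgebraic Fq K ^ n) x = x ^ Fintype.card Fq ^ n := by
  rw [AlgEquiv.coe_pow, coe_frobeniusAlgEquivOfAlgebraic_iterate]

variable {Fq}

theorem pow_card_pow_injOn_of_adjoin_eq_top {α : K} (hα : adjoin Fq {α} = ⊤) :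
    Set.InjOn (fun s : ℕ ↦ α ^ Fintype.card Fq ^ s) (Set.Iio (finrank Fq K)) := by
  intro s hs s' hs' h
  rw [Set.mem_Iio, ← orderOf_frobeniusAlgEquivOfAlgebraic] at hs hs'
  refine pow_injOn_Iio_orderOf hs hs' (AlgEquiv.eq_of_apply_eq_of_adjoin_eq_top hα ?_)
  simpa only [frobeniusAlgEquivOfAlgebraic_pow_apply] using h

theorem algebraMap_ne_pow_card_pow_of_adjoin_eq_top {α : K} (hα : adjoin Fq {α} = ⊤)
    (hrank : 2 ≤ finrank Fq K) (c : Fq) (s : ℕ) : algebraMap Fq K c ≠ α ^ Fintype.card Fq ^ s := by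
  intro hc
  have hα_base : α = algebraMap Fq K c := by
    have := congrArg (frobeniusAlgEquivOfAlgebraic Fq K ^ s).symm hc
    rwa [AlgEquiv.commutes, ← frobeniusAlgEquivOfAlgebraic_pow_apply,
      AlgEquiv.symm_apply_apply, eq_comm] at this
  have := pow_card_pow_injOn_of_adjoin_eq_top hα (show 1 < finrank Fq K by omega)
    (show 0 < finrank Fq K by omega) (by simp [hα_base, ← map_pow, pow_card])
  exact one_ne_zero this

theorem exists_eq_pow_card_pow_of_pow_card_pow_eq {x y : K} {s s' : ℕ}
    (h : x ^ Fintype.card Fq ^ s = y ^ Fintype.card Fq ^ s') :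
    ∃ n, x = y ^ Fintype.card Fq ^ n := by
  set σ := frobeniusAlgEquivOfAlgebraic Fq K
  obtain ⟨n, hn⟩ := (bijective_frobeniusAlgEquivOfAlgebraic_pow Fq K).2 ((σ ^ s)⁻¹ * σ ^ s')
  refine ⟨n, ?_⟩
  rw [← frobeniusAlgEquivOfAlgebraic_pow_apply, ← frobeniusAlgEquivOfAlgebraic_pow_apply] at h
  rw [← frobeniusAlgEquivOfAlgebraic_pow_apply]
  simp only at hn
  rw [hn, AlgEquiv.mul_apply, ← h]
  exact ((σ ^ s).symm_apply_apply x).symm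

theorem injective_pow_card_pow_of_adjoin_eq_top {ρ : Type*} {α : ρ → K}
    (hgen : ∀ r, adjoin Fq {α r} = ⊤)
    (horb : ∀ r r', r ≠ r' → ∀ s : ℕ, α r ≠ α r' ^ Fintype.card Fq ^ s) :
    Injective fun rs : ρ × Fin (finrank Fq K) ↦ α rs.1 ^ Fintype.card Fq ^ (rs.2 : ℕ) := by
  rintro ⟨r, s⟩ ⟨r', s'⟩ h
  obtain rfl : r = r' := by
    by_contra hne
    obtain ⟨n, hn⟩ := exists_eq_pow_card_pow_of_pow_card_pow_eq h
    exact horb r r' hne n hn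
  simpa [Fin.ext_iff] using pow_card_pow_injOn_of_adjoin_eq_top (hgen r) s.2 s'.2 h

end FiniteField

open FiniteField

theorem block_matrix_osculating_conjugates_isUnit_det
    (Fq K : Type) [Field Fq] [Fintype Fq] [Field K] [Fintype K] [Algebra Fq K]
    (p h k j : ℕ) (hchar : ringChar Fq = p) (hph : h ≤ p)
    (hh : 2 ≤ h) (hj : j ≤ k)
    (hrank : Module.finrank Fq K = h)
    (t : Fin j → Fq) (ht : Function.Injective t)
    (α : Fin (k - j) → K)
    (hgen : ∀ r, IntermediateField.adjoin Fq {α r} = ⊤)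
    (horb : ∀ r r', r ≠ r' → ∀ s : ℕ, α r ≠ (α r') ^ (Fintype.card Fq) ^ s) :
    ∀ e : (Fin j × Fin h) ⊕ (Fin (k - j) × Fin h) ≃ Fin (h * k),
      IsUnit (Matrix.det (Matrix.of (fun a i : Fin (h * k) =>
        match e.symm a with
        | Sum.inl (x, ℓ) =>
            if (i : ℕ) < (ℓ : ℕ) then 0
            else (∏ s ∈ Finset.range (ℓ : ℕ), (((i : ℕ) - s : ℕ) : K)) *
              (algebraMap Fq K (t x)) ^ ((i : ℕ) - (ℓ : ℕ))
        | Sum.inr (r, s) =>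
            α r ^ ((i : ℕ) * (Fintype.card Fq) ^ (s : ℕ))))) := by
  intro e
  subst hrank
  have : CharP Fq p := ringChar.of_eq hchar
  have : CharP K p := charP_of_injective_algebraMap (algebraMap Fq K).injective p
  rw [isUnit_iff_ne_zero, Ne, ← Matrix.exists_mulVec_eq_zero_iff]
  rintro ⟨v, hv0, hv⟩
  set P := ∑ i : Fin (finrank Fq K * k), C (v i) * X ^ (i : ℕ) with hP_def
  have hP : P ≠ 0 := by rwa [Ne, sum_C_mul_X_pow_eq_zero_iff]
  have hosc (x : Fin j) : finrank Fq K ≤ P.rootMultiplicity (algebraMap Fq K (t x)) := by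
    refine le_rootMultiplicity_of_isRoot_iterate_derivative p hP hph fun ℓ hℓ ↦ ?_
    rw [IsRoot.def, hP_def, eval_iterate_derivative_sum_C_mul_X_pow]
    simp_rw [eval_iterate_derivative_X_pow]
    simpa [Matrix.mulVec, dotProduct] using congrFun hv (e (.inl (x, ⟨ℓ, hℓ⟩)))
  have hconj (r : Fin (k - j)) (s : Fin (finrank Fq K)) :
      1 ≤ P.rootMultiplicity (α r ^ Fintype.card Fq ^ (s : ℕ)) := by
    refine (rootMultiplicity_pos hP).mpr ?_
    simpa [hP_def, eval_finsetSum, pow_mul', mul_comm (v _), Matrix.mulVec, dotProduct] using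
      congrFun hv (e (.inr (r, s)))
  have hcount := sum_le_natDegree_of_le_rootMultiplicity hP
    (z := Sum.elim (algebraMap Fq K ∘ t) fun rs : Fin (k - j) × Fin (finrank Fq K) ↦
      α rs.1 ^ Fintype.card Fq ^ (rs.2 : ℕ))
    (((algebraMap Fq K).injective.comp ht).sumElim
      (injective_pow_card_pow_of_adjoin_eq_top hgen horb)
      fun x rs ↦ algebraMap_ne_pow_card_pow_of_adjoin_eq_top (hgen rs.1) hh (t x) rs.2)
    (m := Sum.elim (fun _ ↦ finrank Fq K) fun _ ↦ 1)
    (by rintro (x | ⟨r, s⟩); exacts [hosc x, hconj r s])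
  have hdeg : P.natDegree < finrank Fq K * k :=
    (natDegree_lt_iff_degree_lt hP).mpr (degree_sum_fin_lt v)
  simp only [Fintype.sum_sum_type, Sum.elim_inl, Sum.elim_inr, Finset.sum_const, Finset.card_univ,
    Fintype.card_fin, Fintype.card_prod, smul_eq_mul, mul_one] at hcount
  rw [← add_mul, Nat.add_sub_cancel' hj, mul_comm] at hcount
  exact hdeg.not_ge hcount
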